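/- arXiv:1610.02207 — 2 statements merged into one kernel-verified Lean document; each statement's English description precedes it below -/
import Mathlib

section
/- Let d be a positive integer. There exists a continuous function C : (0, ∞) → (0, ∞) such that for every q ∈ ℝ, every λ = (λ_1, …, λ_d) ∈ (0, ∞)^d, and every index j, the partial derivative of H(q; λ) with respect to λ_j satisfies |∂H(q; λ)/∂λ_j| ≤ C(λ_j); in particular, the partial derivatives of the mixture cumulative distribution function with respect to the weights are bounded uniformly in q by a constant depending only on the corresponding weight. -/
open MeasureTheory ProbabilityTheory Filter

/-- The product of `d` independent standard normal distributions. -/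
noncomputable def stdGaussPi (d : ℕ) : Measure (Fin d → ℝ) :=
  Measure.pi fun _ => gaussianReal 0 1

/-- `mixCDF d lam q = H(q; λ) = P(∑ j, λ_j Z_j² ≤ q)` for `Z_1, …, Z_d` IID standard normal. -/
noncomputable def mixCDF (d : ℕ) (lam : Fin d → ℝ) (q : ℝ) : ℝ :=
  (stdGaussPi d {z | ∑ j, lam j * z j ^ 2 ≤ q}).toReal


lemma aux1 (u : ℝ) (hu : 0 ≤ u) : Real.sqrt u * Real.exp (-(u/2)) ≤ 1 := by
  have h1 : Real.sqrt u ≤ Real.exp (u/2) := by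
    rw [Real.exp_half]
    exact Real.sqrt_le_sqrt (by linarith [Real.add_one_le_exp u])
  calc Real.sqrt u * Real.exp (-(u/2)) ≤ Real.exp (u/2) * Real.exp (-(u/2)) :=
        mul_le_mul_of_nonneg_right h1 (Real.exp_pos _).le
    _ = 1 := by rw [← Real.exp_add]; simp

lemma aux2 (r s t : ℝ) (hr : 0 < r) (hs : 0 < s) (hst : s ≤ t) :
    Real.sqrt (r/s) - Real.sqrt (r/t) ≤ Real.sqrt (r/t) * ((t-s)/(2*s)) := by
  have ht : 0 < t := lt_of_lt_of_le hs hst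
  have hw : 1 ≤ t/s := (one_le_div hs).2 hst
  have h1 : Real.sqrt (t/s) ≤ 1 + (t/s - 1)/2 := by
    have h2 : t/s ≤ (1 + (t/s - 1)/2)^2 := by nlinarith
    calc Real.sqrt (t/s) ≤ Real.sqrt ((1 + (t/s - 1)/2)^2) := Real.sqrt_le_sqrt h2
      _ = 1 + (t/s - 1)/2 := Real.sqrt_sq (by nlinarith)
  have h3 : Real.sqrt (r/s) = Real.sqrt (r/t) * Real.sqrt (t/s) := by
    rw [← Real.sqrt_mul (by positivity)]
    congr 1
    field_simp [ht.ne']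
  have h4 : (t/s - 1)/2 = (t-s)/(2*s) := by
    rw [div_sub_one hs.ne', div_div, mul_comm]
  have hA : (0:ℝ) ≤ Real.sqrt (r/t) := Real.sqrt_nonneg _
  rw [h3, ← h4]
  nlinarith

lemma aux3 (r s t : ℝ) (hr : 0 < r) (hs : 0 < s) (hst : s ≤ t) :
    Real.exp (-(r/t/2)) * (2 * (Real.sqrt (r/s) - Real.sqrt (r/t))) ≤ (t-s)/s := by
  have ht : 0 < t := lt_of_lt_of_le hs hst
  have h2 := aux2 r s t hr hs hst
  have h1 : Real.sqrt (r/t) * Real.exp (-(r/t/2)) ≤ 1 := by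
    have := aux1 (r/t) (by positivity)
    rw [show (-(r/t/2) : ℝ) = -((r/t)/2) by ring]
    exact this
  have hE : (0:ℝ) < Real.exp (-(r/t/2)) := Real.exp_pos _
  have hts : 0 ≤ (t - s)/s := div_nonneg (by linarith) hs.le
  have hA : (0:ℝ) ≤ Real.sqrt (r/t) := Real.sqrt_nonneg _
  calc Real.exp (-(r/t/2)) * (2 * (Real.sqrt (r/s) - Real.sqrt (r/t)))
      ≤ Real.exp (-(r/t/2)) * (2 * (Real.sqrt (r/t) * ((t-s)/(2*s)))) := by
        apply mul_le_mul_of_nonneg_left _ hE.le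
        linarith
    _ = (Real.sqrt (r/t) * Real.exp (-(r/t/2))) * ((t-s)/s) := by field_simp
    _ ≤ 1 * ((t-s)/s) := mul_le_mul_of_nonneg_right h1 hts
    _ = (t-s)/s := one_mul _

open scoped NNReal in
lemma pdf_le (x c : ℝ) (h : c ≤ x^2) : gaussianPDFReal 0 1 x ≤ Real.exp (-(c/2)) := by
  rw [gaussianPDFReal]
  simp only [NNReal.coe_one, mul_one, sub_zero]
  have h2pi : 1 ≤ Real.sqrt (2 * Real.pi) := by
    rw [show (1:ℝ) = Real.sqrt 1 by simp]
    exact Real.sqrt_le_sqrt (by nlinarith [Real.pi_gt_three])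
  have hinv : (Real.sqrt (2 * Real.pi))⁻¹ ≤ 1 := by
    rw [inv_le_one_iff₀]; right; exact h2pi
  have hexp : Real.exp (-x^2 / 2) ≤ Real.exp (-(c/2)) :=
    Real.exp_le_exp.2 (by linarith)
  calc (Real.sqrt (2 * Real.pi))⁻¹ * Real.exp (-x^2 / 2)
      ≤ 1 * Real.exp (-(c/2)) := mul_le_mul hinv hexp (Real.exp_pos _).le zero_le_one
    _ = Real.exp (-(c/2)) := one_mul _

lemma gauss1D (r s t : ℝ) (hs : 0 < s) (hst : s ≤ t) :
    gaussianReal 0 1 {x : ℝ | s * x^2 ≤ r ∧ r < t * x^2} ≤ ENNReal.ofReal ((t-s)/s) := by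
  have ht : 0 < t := lt_of_lt_of_le hs hst
  rcases le_or_gt r 0 with hr | hr
  · have hempty : {x : ℝ | s * x^2 ≤ r ∧ r < t * x^2} = ∅ := by
      ext x
      simp only [Set.mem_setOf_eq, Set.mem_empty_iff_false, iff_false, not_and, not_lt]
      intro h1
      nlinarith [sq_nonneg x, mul_le_mul_of_nonneg_left h1 ht.le,
        mul_le_mul_of_nonpos_right hst hr]
    rw [hempty]
    simp
  · set a := Real.sqrt (r/t) with ha
    set b := Real.sqrt (r/s) with hb
    have hab : a ≤ b := Real.sqrt_le_sqrt (by
      apply div_le_div_of_nonneg_left hr.le hs hst)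
    have ha0 : 0 ≤ a := Real.sqrt_nonneg _
    have hsub : {x : ℝ | s * x^2 ≤ r ∧ r < t * x^2} ⊆ Set.Icc a b ∪ Set.Icc (-b) (-a) := by
      rintro x ⟨h1, h2⟩
      have hx2le : x^2 ≤ r/s := (le_div_iff₀ hs).2 (by linarith)
      have hx2ge : r/t ≤ x^2 := (div_le_iff₀ ht).2 (by linarith)
      have hxb : |x| ≤ b := by
        rw [← Real.sqrt_sq_eq_abs]; exact Real.sqrt_le_sqrt hx2le
      have hxa : a ≤ |x| := by
        rw [← Real.sqrt_sq_eq_abs]; exact Real.sqrt_le_sqrt hx2ge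
      rcases le_total 0 x with hx | hx
      · left
        rw [abs_of_nonneg hx] at hxa hxb
        exact ⟨hxa, hxb⟩
      · right
        rw [abs_of_nonpos hx] at hxa hxb
        constructor <;> linarith
    have hUbound : ∀ x ∈ Set.Icc a b ∪ Set.Icc (-b) (-a),
        gaussianPDF 0 1 x ≤ ENNReal.ofReal (Real.exp (-(r/t/2))) := by
      intro x hx
      have hax : a ≤ |x| := by
        rcases hx with hx | hx
        · rw [abs_of_nonneg (le_trans ha0 hx.1)]; exact hx.1
        · rw [abs_of_nonpos (le_trans hx.2 (by linarith))]; linarith [hx.2]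
      have hx2 : r/t ≤ x^2 := by
        have := mul_self_le_mul_self ha0 hax
        rw [← Real.sqrt_sq_eq_abs] at hax
        nlinarith [Real.sq_sqrt (show (0:ℝ) ≤ r/t by positivity), abs_nonneg x,
          sq_abs x]
      rw [gaussianPDF]
      exact ENNReal.ofReal_le_ofReal (pdf_le x (r/t) hx2)
    calc gaussianReal 0 1 {x : ℝ | s * x^2 ≤ r ∧ r < t * x^2}
        ≤ gaussianReal 0 1 (Set.Icc a b ∪ Set.Icc (-b) (-a)) := measure_mono hsub
      _ = ∫⁻ x in Set.Icc a b ∪ Set.Icc (-b) (-a), gaussianPDF 0 1 x :=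
          gaussianReal_apply 0 one_ne_zero _
      _ ≤ ∫⁻ _x in Set.Icc a b ∪ Set.Icc (-b) (-a), ENNReal.ofReal (Real.exp (-(r/t/2))) :=
          setLIntegral_mono' ((measurableSet_Icc).union measurableSet_Icc) hUbound
      _ = ENNReal.ofReal (Real.exp (-(r/t/2))) *
            volume (Set.Icc a b ∪ Set.Icc (-b) (-a)) := by
          rw [setLIntegral_const]
      _ ≤ ENNReal.ofReal (Real.exp (-(r/t/2))) * (ENNReal.ofReal (b - a) + ENNReal.ofReal (b - a)) := by
          apply mul_le_mul_right 
          calc volume (Set.Icc a b ∪ Set.Icc (-b) (-a))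
              ≤ volume (Set.Icc a b) + volume (Set.Icc (-b) (-a)) := measure_union_le _ _
            _ = ENNReal.ofReal (b - a) + ENNReal.ofReal (b - a) := by
                rw [Real.volume_Icc, Real.volume_Icc,
                  show (-a - -b : ℝ) = b - a by ring]
      _ = ENNReal.ofReal (Real.exp (-(r/t/2)) * (2 * (b - a))) := by
          rw [← ENNReal.ofReal_add (by linarith) (by linarith),
            ← ENNReal.ofReal_mul (Real.exp_pos _).le]
          congr 1
          ring
      _ ≤ ENNReal.ofReal ((t-s)/s) := ENNReal.ofReal_le_ofReal (aux3 r s t hr hs hst)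

instance (d : ℕ) : IsProbabilityMeasure (stdGaussPi d) := by
  unfold stdGaussPi; infer_instance

lemma key (n : ℕ) (q : ℝ) (lam : Fin (n+1) → ℝ) (j : Fin (n+1)) {s t : ℝ}
    (hs : 0 < s) (hst : s ≤ t) :
    mixCDF (n+1) (Function.update lam j t) q ≤ mixCDF (n+1) (Function.update lam j s) q ∧
    mixCDF (n+1) (Function.update lam j s) q ≤ mixCDF (n+1) (Function.update lam j t) q + (t-s)/s := by
  set μ := stdGaussPi (n+1) with hμ
  set A : ℝ → Set (Fin (n+1) → ℝ) :=
    fun u => {z | ∑ k, Function.update lam j u k * z k ^ 2 ≤ q} with hA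
  have hmeas : ∀ u, MeasurableSet (A u) := by
    intro u
    apply measurableSet_le _ measurable_const
    exact Finset.measurable_sum _ fun k _ =>
      ((measurable_pi_apply k).pow_const 2).const_mul _
  have hAsub : A t ⊆ A s := by
    intro z hz
    have hsum : ∑ k, Function.update lam j s k * z k ^ 2 ≤
        ∑ k, Function.update lam j t k * z k ^ 2 := by
      apply Finset.sum_le_sum
      intro k _
      rcases eq_or_ne k j with rfl | hk
      · simp only [Function.update_self]
        exact mul_le_mul_of_nonneg_right hst (sq_nonneg _)
      · rw [Function.update_of_ne hk, Function.update_of_ne hk]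
    exact le_trans hsum hz
  -- the diff bound
  have hdiff : μ (A s \ A t) ≤ ENNReal.ofReal ((t-s)/s) := by
    set e := MeasurableEquiv.piFinSuccAbove (fun _ : Fin (n+1) => ℝ) j with he
    have mp := measurePreserving_piFinSuccAbove (fun _ : Fin (n+1) => gaussianReal 0 1) j
    set ν := (gaussianReal 0 1).prod (Measure.pi fun _ : Fin n => gaussianReal 0 1) with hν
    have h1 : μ (A s \ A t) = ν (e.symm ⁻¹' (A s \ A t)) :=
      ((mp.symm e).measure_preimage_equiv _).symm
    have hBmeas : MeasurableSet (e.symm ⁻¹' (A s \ A t)) :=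
      e.symm.measurable ((hmeas s).diff (hmeas t))
    rw [h1, Measure.prod_apply_symm hBmeas]
    have hslice : ∀ y : Fin n → ℝ,
        ((fun x => (x, y)) ⁻¹' (e.symm ⁻¹' (A s \ A t))) =
        {x : ℝ | s * x^2 ≤ q - ∑ k, lam (j.succAbove k) * (y k)^2 ∧
          q - ∑ k, lam (j.succAbove k) * (y k)^2 < t * x^2} := by
      intro y
      ext x
      have hmem : ∀ u : ℝ, (e.symm (x, y) ∈ A u) ↔
          (u * x^2 + ∑ k, lam (j.succAbove k) * (y k)^2 ≤ q) := by
        intro u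
        have hes : e.symm (x, y) = j.insertNth x y := rfl
        simp only [hA, Set.mem_setOf_eq, hes]
        rw [Fin.sum_univ_succAbove _ j]
        simp [Fin.insertNth_apply_same, Fin.insertNth_apply_succAbove,
          Function.update_of_ne (Fin.succAbove_ne j _)]
      simp only [Set.mem_preimage, Set.mem_diff, hmem, Set.mem_setOf_eq]
      constructor
      · rintro ⟨h1, h2⟩; push_neg at h2; exact ⟨by linarith, by linarith⟩
      · rintro ⟨h1, h2⟩; exact ⟨by linarith, by push_neg; linarith⟩
    calc ∫⁻ y, gaussianReal 0 1 ((fun x => (x, y)) ⁻¹' (e.symm ⁻¹' (A s \ A t)))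
          ∂(Measure.pi fun _ : Fin n => gaussianReal 0 1)
        ≤ ∫⁻ _y, ENNReal.ofReal ((t-s)/s)
          ∂(Measure.pi fun _ : Fin n => gaussianReal 0 1) := by
          refine lintegral_mono fun y => ?_
          dsimp only
          rw [hslice y]
          exact gauss1D _ s t hs hst
      _ = ENNReal.ofReal ((t-s)/s) := by
          rw [lintegral_const, measure_univ, mul_one]
  have hfin : ∀ u, μ (A u) ≠ ⊤ := fun u => measure_ne_top μ _
  have hadd : μ (A t) + μ (A s \ A t) = μ (A s) := by
    rw [measure_add_diff (hmeas t).nullMeasurableSet (A s), Set.union_eq_self_of_subset_left hAsub]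
  have hCDF : ∀ u, mixCDF (n+1) (Function.update lam j u) q = (μ (A u)).toReal := fun u => rfl
  constructor
  · rw [hCDF, hCDF]
    exact ENNReal.toReal_mono (hfin s) (measure_mono hAsub)
  · rw [hCDF, hCDF]
    have h2 : (μ (A s)).toReal = (μ (A t)).toReal + (μ (A s \ A t)).toReal := by
      rw [← hadd, ENNReal.toReal_add (hfin t) (measure_ne_top μ _)]
    rw [h2]
    have h3 : (μ (A s \ A t)).toReal ≤ (t-s)/s :=
      ENNReal.toReal_le_of_le_ofReal (div_nonneg (by linarith) hs.le) hdiff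
    linarith

theorem stmt8 (d : ℕ) (hd : 0 < d) :
    ∃ C : ℝ → ℝ, ContinuousOn C (Set.Ioi (0 : ℝ)) ∧ (∀ x ∈ Set.Ioi (0 : ℝ), 0 < C x) ∧
      ∀ (q : ℝ) (lam : Fin d → ℝ), (∀ i, 0 < lam i) → ∀ j : Fin d,
        |deriv (fun t => mixCDF d (Function.update lam j t) q) (lam j)| ≤ C (lam j) := by
  obtain ⟨n, rfl⟩ : ∃ n, d = n + 1 := ⟨d - 1, (Nat.succ_pred_eq_of_pos hd).symm⟩
  refine ⟨fun x => 2 / x, ?_, ?_, ?_⟩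
  · exact continuousOn_const.div continuousOn_id fun x hx => ne_of_gt hx
  · intro x hx
    exact div_pos two_pos hx
  · intro q lam hlam j
    set L := lam j with hLdef
    have hL : 0 < L := hlam j
    set g : ℝ → ℝ := fun u => mixCDF (n+1) (Function.update lam j u) q with hg
    have hlip : ∀ᶠ x in nhds L, ‖g x - g L‖ ≤ (2 / L) * ‖x - L‖ := by
      filter_upwards [Ioi_mem_nhds (half_lt_self hL)] with x hx
      have hx0 : 0 < x := lt_trans (by positivity) hx
      rw [Real.norm_eq_abs, Real.norm_eq_abs]
      rcases le_total x L with h | h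
      · obtain ⟨k1, k2⟩ := key n q lam j hx0 h
        rw [abs_of_nonneg (by linarith : (0:ℝ) ≤ g x - g L),
          abs_of_nonpos (by linarith : x - L ≤ 0)]
        have hratio : (L - x)/x ≤ 2/L * (L - x) := by
          rw [div_le_iff₀ hx0, div_mul_eq_mul_div, div_mul_eq_mul_div, le_div_iff₀ hL]
          nlinarith [Set.mem_Ioi.1 hx]
        calc g x - g L ≤ (L - x)/x := by linarith
          _ ≤ 2/L * (L - x) := hratio
          _ = 2/L * -(x - L) := by ring
      · obtain ⟨k1, k2⟩ := key n q lam j hL h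
        rw [abs_of_nonpos (by linarith : g x - g L ≤ 0),
          abs_of_nonneg (by linarith : (0:ℝ) ≤ x - L)]
        have hratio : (x - L)/L ≤ 2/L * (x - L) := by
          rw [div_le_iff₀ hL, div_mul_eq_mul_div, div_mul_eq_mul_div, le_div_iff₀ hL]
          nlinarith
        calc -(g x - g L) ≤ (x - L)/L := by linarith
          _ ≤ 2/L * (x - L) := hratio
    have hb := norm_fderiv_le_of_lip' ℝ (by positivity : (0:ℝ) ≤ 2 / L) hlip
    calc |deriv g L| = ‖(fderiv ℝ g L) 1‖ := by rw [← fderiv_apply_one_eq_deriv]; exact (Real.norm_eq_abs _).symm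
      _ ≤ ‖fderiv ℝ g L‖ * ‖(1:ℝ)‖ := ContinuousLinearMap.le_opNorm _ _
      _ = ‖fderiv ℝ g L‖ := by rw [norm_one, mul_one]
      _ ≤ 2 / L := hb
end

section
/- Let d be a positive integer and let λ = (λ_1, …, λ_d) be a vector with strictly positive entries. Let (T_n) be a sequence of real-valued random variables converging in distribution to Σ_{j=1}^d λ_j Z_j², where Z_1, …, Z_d are independent standard normal random variables, and let (λ̂_n) be a sequence of random vectors in ℝ^d converging in probability to λ. Define p̂_n = 1 − H(T_n; λ̂_n). Then for every significance level α ∈ (0, 1), the Type I error rate P(p̂_n ≤ α) converges to α as n → ∞. -/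
open MeasureTheory ProbabilityTheory Filter

/-- The law of the weighted chi-square mixture `∑ j, λ_j Z_j²`. -/
noncomputable def mixLaw (d : ℕ) (lam : Fin d → ℝ) : Measure ℝ :=
  (stdGaussPi d).map fun z => ∑ j, lam j * z j ^ 2

/-! The law of `∑ λ_j Z_j²` has no atoms (by Fubini in the first coordinate, where a level set
has at most two points), so `F = H(·; λ)` is a continuous cdf, and `F q = 1 - α` for the least
`q` with `1 - α ≤ F q`. Since `H(t; cλ) = F(t / c)` and `H(t; ·)` is antitone, on the event
`cλ ≤ λ̂_n ≤ c'λ`, whose probability tends to one for `c < 1 < c'`, the test rejects whenever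
`c' q ≤ T_n` and only if `c q ≤ T_n`. By the portmanteau theorem `P(c q ≤ T_n) → 1 - F(c q)`,
and letting `c, c' → 1` squeezes the rejection probability to `1 - F q = α`. -/

open Set Topology BoundedContinuousFunction

theorem Monotone.exists_eq_and_le_iff_le {α δ : Type*} [ConditionallyCompleteLinearOrder α]
    [TopologicalSpace α] [OrderTopology α] [DenselyOrdered α] [LinearOrder δ]
    [TopologicalSpace δ] [OrderClosedTopology δ] {F : α → δ} (hmono : Monotone F)
    (hcont : Continuous F) {β : δ} (hlow : ∃ x, F x < β) (hhigh : ∃ x, β ≤ F x) :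
    ∃ q, F q = β ∧ ∀ x, β ≤ F x ↔ q ≤ x := by
  obtain ⟨a, ha⟩ := hlow
  obtain ⟨b, hb⟩ := hhigh
  set S := {x | β ≤ F x}
  have hbdd : BddBelow S := ⟨a, fun x hx => le_of_not_gt fun hxa =>
    (ha.trans_le hx).not_ge (hmono hxa.le)⟩
  have hq : sInf S ∈ S := (isClosed_le continuous_const hcont).csInf_mem ⟨b, hb⟩ hbdd
  have haq : a ≤ sInf S := le_of_not_gt fun hqa => (ha.trans_le hq).not_ge (hmono hqa.le)
  obtain ⟨y, hy, hFy⟩ := intermediate_value_Icc haq hcont.continuousOn ⟨ha.le, hq⟩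
  have hyq : y = sInf S := le_antisymm hy.2 (csInf_le hbdd hFy.ge)
  exact ⟨sInf S, hyq ▸ hFy, fun x => ⟨fun hx => csInf_le hbdd hx, fun hx => hq.trans (hmono hx)⟩⟩

theorem ProbabilityTheory.continuous_cdf (μ : Measure ℝ) [IsProbabilityMeasure μ]
    [NullSingletonClass μ] : Continuous (cdf μ) := by
  refine continuous_iff_continuousAt.2 fun x => ?_
  rw [(monotone_cdf μ).continuousAt_iff_leftLim_eq_rightLim, StieltjesFunction.rightLim_eq]
  have h := (cdf μ).measure_singleton x
  rw [measure_cdf, measure_singleton, eq_comm, ENNReal.ofReal_eq_zero, sub_nonpos] at h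
  exact le_antisymm ((monotone_cdf μ).leftLim_le le_rfl) h

theorem ProbabilityTheory.exists_cdf_eq_and_le_iff_le (μ : Measure ℝ) [IsProbabilityMeasure μ]
    [NullSingletonClass μ] {β : ℝ} (hβ : β ∈ Ioo 0 1) :
    ∃ q, cdf μ q = β ∧ ∀ x, β ≤ cdf μ x ↔ q ≤ x :=
  (monotone_cdf μ).exists_eq_and_le_iff_le (continuous_cdf μ)
    ((tendsto_cdf_atBot μ).eventually (gt_mem_nhds hβ.1)).exists
    (((tendsto_cdf_atTop μ).eventually (lt_mem_nhds hβ.2)).exists.imp fun _ => le_of_lt)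

theorem ProbabilityTheory.measureReal_Ici_eq_one_sub_cdf (μ : Measure ℝ) [IsProbabilityMeasure μ]
    [NullSingletonClass μ] (t : ℝ) : μ.real (Ici t) = 1 - cdf μ t := by
  rw [cdf_eq_real, ← measureReal_congr (Iio_ae_eq_Iic (μ := μ)), ← compl_Ici,
    measureReal_compl measurableSet_Ici, probReal_univ, sub_sub_cancel]

theorem MeasureTheory.measureReal_le_add_compl_of_inter_subset {α : Type*} [MeasurableSpace α]
    {μ : Measure α} [IsFiniteMeasure μ] {A B G : Set α} (h : A ∩ G ⊆ B) :
    μ.real A ≤ μ.real B + μ.real Gᶜ :=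
  calc μ.real A ≤ μ.real (B ∪ Gᶜ) :=
        measureReal_mono fun x hx => (em (x ∈ G)).imp (fun hG => h ⟨hx, hG⟩) id
    _ ≤ μ.real B + μ.real Gᶜ := measureReal_union_le _ _

theorem MeasureTheory.tendsto_measureReal_preimage_of_tendsto_integral {Ω E ι : Type*}
    [MeasurableSpace Ω] [TopologicalSpace E] [MeasurableSpace E] [OpensMeasurableSpace E]
    [HasOuterApproxClosed E] {l : Filter ι} (P : Measure Ω) [IsProbabilityMeasure P]
    {X : ι → Ω → E} (hX : ∀ i, AEMeasurable (X i) P) (ν : Measure E) [IsProbabilityMeasure ν]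
    (h : ∀ g : E →ᵇ ℝ, Tendsto (fun i => ∫ ω, g (X i ω) ∂P) l (𝓝 (∫ x, g x ∂ν)))
    {S : Set E} (hSm : MeasurableSet S) (hS : ν (frontier S) = 0) :
    Tendsto (fun i => P.real (X i ⁻¹' S)) l (𝓝 (ν.real S)) := by
  let μs : ι → ProbabilityMeasure E := fun i =>
    ⟨P.map (X i), Measure.isProbabilityMeasure_map (hX i)⟩
  have hlim : Tendsto μs l (𝓝 ⟨ν, inferInstance⟩) := by
    refine ProbabilityMeasure.tendsto_iff_forall_integral_tendsto.2 fun g => ?_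
    simpa only [μs, ProbabilityMeasure.coe_mk,
      integral_map (hX _) g.continuous.aestronglyMeasurable] using h g
  have := (ENNReal.tendsto_toReal (measure_ne_top ν S)).comp
    (ProbabilityMeasure.tendsto_measure_of_null_frontier_of_tendsto' hlim hS)
  simpa [Function.comp_def, μs, Measure.map_apply_of_aemeasurable (hX _) hSm, measureReal_def]
    using this

theorem tendsto_measureReal_preimage_compl_of_mem_nhds {Ω E ι : Type*} [MeasurableSpace Ω]
    [SeminormedAddCommGroup E] {l : Filter ι} (P : Measure Ω) [IsFiniteMeasure P]
    {Y : ι → Ω → E} {y : E} (h : ∀ ε > 0, Tendsto (fun i => P {ω | ε < ‖Y i ω - y‖}) l (𝓝 0))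
    {U : Set E} (hU : U ∈ 𝓝 y) : Tendsto (fun i => P.real (Y i ⁻¹' Uᶜ)) l (𝓝 0) := by
  obtain ⟨ε, hε, hball⟩ := Metric.nhds_basis_closedBall.mem_iff.1 hU
  refine tendsto_of_tendsto_of_tendsto_of_le_of_le tendsto_const_nhds
    ((ENNReal.tendsto_toReal ENNReal.zero_ne_top).comp (h ε hε)) (fun i => measureReal_nonneg)
    fun i => measureReal_mono fun ω hω => ?_
  simpa [dist_eq_norm] using fun h' => hω (hball h')

theorem tendsto_of_squeeze_family {p : ℕ → ℝ} {a : ℝ} {g : ℝ → ℝ} (hg : ContinuousAt g 1)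
    (hg1 : g 1 = a) {lo hi : ℝ → ℕ → ℝ} (hlo : ∀ c > 1, Tendsto (lo c) atTop (𝓝 (g c)))
    (hhi : ∀ c ∈ Ioo 0 1, Tendsto (hi c) atTop (𝓝 (g c))) (hlop : ∀ c > 1, ∀ n, lo c n ≤ p n)
    (hhip : ∀ c ∈ Ioo 0 1, ∀ n, p n ≤ hi c n) : Tendsto p atTop (𝓝 a) := by
  subst hg1
  refine tendsto_order.2 ⟨fun b hb => ?_, fun b hb => ?_⟩
  · obtain ⟨c, hbc, hc⟩ :=
      (((hg.eventually (lt_mem_nhds hb)).filter_mono nhdsWithin_le_nhds).and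
        self_mem_nhdsWithin).exists (f := 𝓝[>] 1)
    exact ((hlo c hc).eventually (lt_mem_nhds hbc)).mono fun n hn => hn.trans_le (hlop c hc n)
  · obtain ⟨c, hbc, hc⟩ :=
      (((hg.eventually (gt_mem_nhds hb)).filter_mono nhdsWithin_le_nhds).and
        (Ioo_mem_nhdsLT one_pos)).exists (f := 𝓝[<] 1)
    exact ((hhi c hc).eventually (gt_mem_nhds hbc)).mono fun n hn => (hhip c hc n).trans_lt hn

theorem MeasureTheory.measure_setOf_mul_sq_eq {μ : Measure ℝ} [NullSingletonClass μ] {a : ℝ}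
    (ha : a ≠ 0) (c : ℝ) : μ {x | a * x ^ 2 = c} = 0 := by
  refine measure_mono_null (fun x (hx : a * x ^ 2 = c) => ?_)
    ((Set.toFinite {√(c / a), -√(c / a)}).measure_zero μ)
  have : |x| = √(c / a) := by rw [← Real.sqrt_sq_eq_abs, ← hx, mul_div_cancel_left₀ _ ha]
  exact (abs_eq (Real.sqrt_nonneg _)).1 this

theorem MeasureTheory.measure_pi_setOf_sum_mul_sq_eq {n : ℕ} (μ : Fin (n + 1) → Measure ℝ)
    [∀ i, SigmaFinite (μ i)] [NullSingletonClass (μ 0)] {lam : Fin (n + 1) → ℝ}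
    (h0 : lam 0 ≠ 0) (q : ℝ) : Measure.pi μ {z | ∑ j, lam j * z j ^ 2 = q} = 0 := by
  set S : Set (ℝ × (Fin n → ℝ)) := {p | lam 0 * p.1 ^ 2 = q - ∑ j, lam j.succ * p.2 j ^ 2}
  have hS : MeasurableSet S := measurableSet_eq_fun (by fun_prop) (by fun_prop)
  have hpre : {z | ∑ j, lam j * z j ^ 2 = q} =
      MeasurableEquiv.piFinSuccAbove (fun _ => ℝ) 0 ⁻¹' S := by
    ext z
    simp [S, Fin.sum_univ_succ, eq_sub_iff_add_eq, Fin.tail]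
  rw [hpre, (measurePreserving_piFinSuccAbove μ 0).measure_preimage hS.nullMeasurableSet,
    Measure.prod_apply_symm hS]
  simp [S, measure_setOf_mul_sq_eq h0]

section ChiSquareMixture

variable {d : ℕ}

instance isProbabilityMeasure_stdGaussPi : IsProbabilityMeasure (stdGaussPi d) := by
  unfold stdGaussPi; infer_instance

instance isProbabilityMeasure_mixLaw (lam : Fin d → ℝ) :
    IsProbabilityMeasure (mixLaw d lam) :=
  Measure.isProbabilityMeasure_map (by fun_prop : Measurable _).aemeasurable

theorem nullSingletonClass_mixLaw {n : ℕ} {lam : Fin (n + 1) → ℝ} (h0 : lam 0 ≠ 0) :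
    NullSingletonClass (mixLaw (n + 1) lam) := by
  have := nullSingletonClass_gaussianReal (μ := 0) one_ne_zero
  refine ⟨fun q => ?_⟩
  rw [mixLaw, Measure.map_apply (by fun_prop) (measurableSet_singleton q)]
  exact measure_pi_setOf_sum_mul_sq_eq _ h0 q

theorem mixCDF_eq_cdf (lam : Fin d → ℝ) : mixCDF d lam = cdf (mixLaw d lam) := by
  ext q
  rw [cdf_eq_real, measureReal_def, mixLaw, Measure.map_apply (by fun_prop) measurableSet_Iic]
  rfl

theorem mixCDF_smul (lam : Fin d → ℝ) {c : ℝ} (hc : 0 < c) (q : ℝ) :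
    mixCDF d (c • lam) q = mixCDF d lam (q / c) := by
  simp only [mixCDF, le_div_iff₀ hc, Finset.sum_mul, Pi.smul_apply, smul_eq_mul]
  simp only [mul_comm c, mul_right_comm _ c]

theorem antitone_mixCDF (q : ℝ) : Antitone fun lam : Fin d → ℝ => mixCDF d lam q :=
  fun _ _ hlam => measureReal_mono fun z (hz : _ ≤ q) =>
    (Finset.sum_le_sum fun j _ => mul_le_mul_of_nonneg_right (hlam j) (sq_nonneg _)).trans hz

theorem le_mixCDF_of_le_smul {lam v : Fin d → ℝ} {c q t β : ℝ} (hc : 0 < c)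
    (hq : ∀ x, β ≤ mixCDF d lam x ↔ q ≤ x) (hv : v ≤ c • lam) (ht : c * q ≤ t) :
    β ≤ mixCDF d v t :=
  calc β ≤ mixCDF d lam (t / c) := (hq _).2 ((le_div_iff₀ hc).2 (by linarith))
    _ = mixCDF d (c • lam) t := (mixCDF_smul lam hc t).symm
    _ ≤ mixCDF d v t := antitone_mixCDF t hv

theorem mul_le_of_le_mixCDF {lam v : Fin d → ℝ} {c q t β : ℝ} (hc : 0 < c)
    (hq : ∀ x, β ≤ mixCDF d lam x ↔ q ≤ x) (hv : c • lam ≤ v) (h : β ≤ mixCDF d v t) :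
    c * q ≤ t := by
  have hqt := (hq (t / c)).1 (h.trans (mixCDF_smul lam hc t ▸ antitone_mixCDF t hv))
  rwa [le_div_iff₀ hc, mul_comm] at hqt

end ChiSquareMixture

theorem stmt15_general {Ω : Type*} [MeasurableSpace Ω] (P : Measure Ω) [IsProbabilityMeasure P]
    (d : ℕ) (hd : 0 < d) (lam : Fin d → ℝ) (hlam : ∀ j, 0 < lam j)
    (T : ℕ → Ω → ℝ) (hT : ∀ n, Measurable (T n))
    (hTdist : ∀ g : BoundedContinuousFunction ℝ ℝ,
      Tendsto (fun n => ∫ ω, g (T n ω) ∂P) atTop (nhds (∫ x, g x ∂(mixLaw d lam))))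
    (lamHat : ℕ → Ω → Fin d → ℝ)
    (hprob : ∀ ε > 0, Tendsto (fun n => P {ω | ε < ‖lamHat n ω - lam‖}) atTop (nhds 0)) :
    ∀ α ∈ Set.Ioo (0 : ℝ) 1,
      Tendsto
        (fun n => (P {ω | 1 - mixCDF d (lamHat n ω) (T n ω) ≤ α}).toReal)
        atTop (nhds α) := by
  rintro α ⟨hα0, hα1⟩
  obtain ⟨n, rfl⟩ := Nat.exists_eq_add_one_of_ne_zero hd.ne'
  have := nullSingletonClass_mixLaw (hlam 0).ne'
  set ν := mixLaw (n + 1) lam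
  have hFcont := continuous_cdf ν
  obtain ⟨q, hFq, hq⟩ := exists_cdf_eq_and_le_iff_le ν (β := 1 - α) ⟨by linarith, by linarith⟩
  rw [← mixCDF_eq_cdf] at hq
  have hport (t : ℝ) : Tendsto (fun k => P.real (T k ⁻¹' Ici t)) atTop (𝓝 (1 - cdf ν t)) := by
    simpa only [measureReal_Ici_eq_one_sub_cdf] using
      tendsto_measureReal_preimage_of_tendsto_integral P (fun k => (hT k).aemeasurable) ν hTdist
        measurableSet_Ici (by simp)
  have hbad {U} (hU : U ∈ 𝓝 lam) := tendsto_measureReal_preimage_compl_of_mem_nhds P hprob hU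
  refine tendsto_of_squeeze_family (g := fun c => 1 - cdf ν (c * q)) (by fun_prop) (by simp [hFq])
    (lo := fun c k => P.real (T k ⁻¹' Ici (c * q)) - P.real (lamHat k ⁻¹' (Iic (c • lam))ᶜ))
    (hi := fun c k => P.real (T k ⁻¹' Ici (c * q)) + P.real (lamHat k ⁻¹' (Ici (c • lam))ᶜ))
    (fun c hc => ?_) (fun c hc => ?_) (fun c hc k => ?_) (fun c hc k => ?_)
  · simpa using (hport _).sub (hbad (pi_Iic_mem_nhds fun j => by
      simpa using lt_mul_of_one_lt_left (hlam j) hc))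
  · simpa using (hport _).add (hbad (pi_Ici_mem_nhds fun j => by
      simpa using mul_lt_of_lt_one_left (hlam j) hc.2))
  · rw [sub_le_iff_le_add]
    refine measureReal_le_add_compl_of_inter_subset ?_
    rintro ω ⟨hTω : c * q ≤ T k ω, hv : lamHat k ω ≤ c • lam⟩
    exact sub_le_comm.2 (le_mixCDF_of_le_smul (zero_lt_one.trans hc) hq hv hTω)
  · refine measureReal_le_add_compl_of_inter_subset ?_
    rintro ω ⟨hp : 1 - _ ≤ α, hv : c • lam ≤ lamHat k ω⟩
    exact mul_le_of_le_mixCDF hc.1 hq hv (sub_le_comm.1 hp)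

theorem stmt15 {Ω : Type*} [MeasurableSpace Ω] (P : Measure Ω) [IsProbabilityMeasure P]
    (d : ℕ) (hd : 0 < d) (lam : Fin d → ℝ) (hlam : ∀ j, 0 < lam j)
    (T : ℕ → Ω → ℝ) (hT : ∀ n, Measurable (T n))
    (hTdist : ∀ g : BoundedContinuousFunction ℝ ℝ,
      Tendsto (fun n => ∫ ω, g (T n ω) ∂P) atTop (nhds (∫ x, g x ∂(mixLaw d lam))))
    (lamHat : ℕ → Ω → Fin d → ℝ) (hlamHat : ∀ n, Measurable (lamHat n))
    (hprob : ∀ ε > 0, Tendsto (fun n => P {ω | ε < ‖lamHat n ω - lam‖}) atTop (nhds 0)) :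
    ∀ α ∈ Set.Ioo (0 : ℝ) 1,
      Tendsto
        (fun n => (P {ω | 1 - mixCDF d (lamHat n ω) (T n ω) ≤ α}).toReal)
        atTop (nhds α) :=
  stmt15_general P d hd lam hlam T hT hTdist lamHat hprob
end
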